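/- Let T, S ∈ B_{A^{1/2}}(H) and λ ∈ [0,1]. T is (A,λ)-Birkhoff–James orthogonal to S (i.e. ‖T + ξS‖_{(A,λ)} ≥ ‖T‖_{(A,λ)} for all ξ ∈ ℂ) if and only if ‖T + ξS‖_{(A,λ)}² ≥ ‖T‖_{(A,λ)}² + |ξ|²·m_{(A,λ)}(S)² for all ξ ∈ ℂ, where m_{(A,λ)}(S) = inf{ √(λ‖Sx‖_A² + (1−λ)|⟨Sx,x⟩_A|²) : ‖x‖_A = 1 }. -/

import Mathlib

open Filter Topology

variable {H : Type*}

/-- The `A`-semi-inner product, paper convention (linear in the first argument):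
`⟨x, y⟩_A = ⟨Ax, y⟩`. -/
noncomputable def innA [NormedAddCommGroup H] [InnerProductSpace ℂ H]
    (A : H →L[ℂ] H) (x y : H) : ℂ :=
  @inner ℂ H _ y (A x)

/-- The seminorm `‖x‖_A = √⟨Ax, x⟩`. -/
noncomputable def normA [NormedAddCommGroup H] [InnerProductSpace ℂ H]
    (A : H →L[ℂ] H) (x : H) : ℝ :=
  Real.sqrt (innA A x x).re

/-- The quantity `√(λ‖Tx‖_A² + (1−λ)|⟨Tx,x⟩_A|²)`. -/
noncomputable def qA [NormedAddCommGroup H] [InnerProductSpace ℂ H]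
    (A : H →L[ℂ] H) (l : ℝ) (T : H →L[ℂ] H) (x : H) : ℝ :=
  Real.sqrt (l * normA A (T x) ^ 2 + (1 - l) * ‖innA A (T x) x‖ ^ 2)

/-- The seminorm `‖T‖_{(A,λ)}`. -/
noncomputable def semNormA [NormedAddCommGroup H] [InnerProductSpace ℂ H]
    (A : H →L[ℂ] H) (l : ℝ) (T : H →L[ℂ] H) : ℝ :=
  sSup {r : ℝ | ∃ x : H, normA A x = 1 ∧ r = qA A l T x}

/-- The quantity `m_{(A,λ)}(S) = inf { √(λ‖Sx‖_A² + (1−λ)|⟨Sx,x⟩_A|²) : ‖x‖_A = 1 }`. -/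
noncomputable def mA [NormedAddCommGroup H] [InnerProductSpace ℂ H]
    (A : H →L[ℂ] H) (l : ℝ) (S : H →L[ℂ] H) : ℝ :=
  sInf {r : ℝ | ∃ x : H, normA A x = 1 ∧ r = qA A l S x}

/-! With `R = A^{1/2}`, `‖y‖_A = ‖R y‖` and `⟨y, x⟩_A = ⟪R x, R y⟫`, so for a fixed `A`-unit
vector `x` the function `t ↦ q(T + tξS, x)²` is a real quadratic polynomial with leading
coefficient `|ξ|² q(S, x)² ≥ |ξ|² m(S)²`. If `‖T + tξS‖ ≥ ‖T‖`, pick `x` with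
`q(T + tξS, x)² > ‖T‖² - t²`; evaluating the quadratic at `0`, `t` and `1` gives
`‖T + ξS‖² ≥ ‖T‖² - t + (1 - t)|ξ|² m(S)²`, and `t → 0⁺` yields the claim. -/

open Set
open scoped InnerProductSpace

theorem exists_lt_sq_of_lt_sq_ciSup {ι : Type*} [Nonempty ι] {f : ι → ℝ} (hf : ∀ i, 0 ≤ f i)
    {s : ℝ} (hs : s < (⨆ i, f i) ^ 2) : ∃ i, s < f i ^ 2 := by
  rcases lt_or_ge s 0 with hs0 | hs0
  · exact ⟨Classical.arbitrary ι, hs0.trans_le (sq_nonneg _)⟩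
  have hpos : 0 < ⨆ i, f i :=
    lt_of_le_of_ne (Real.iSup_nonneg hf) (by rintro h; rw [← h] at hs; linarith)
  obtain ⟨i, hi⟩ := exists_lt_of_lt_ciSup ((Real.sqrt_lt' hpos).2 hs)
  exact ⟨i, (Real.sqrt_lt' ((Real.sqrt_nonneg s).trans_lt hi)).1 hi⟩

theorem sq_ciInf_le {ι : Type*} {f : ι → ℝ} (hf : ∀ i, 0 ≤ f i) (i : ι) :
    (⨅ i, f i) ^ 2 ≤ f i ^ 2 :=
  pow_le_pow_left₀ (Real.iInf_nonneg hf) (ciInf_le ⟨0, forall_mem_range.2 hf⟩ i) 2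

theorem sq_ciSup_zero_add_le_sq_ciSup_one {ι : Type*} [Nonempty ι] (g : ℝ → ι → ℝ)
    (c : ι → ℝ) (μ : ℝ) (hg : ∀ t i, 0 ≤ g t i) (hbdd : ∀ t, BddAbove (range (g t)))
    (hline : ∀ t i, g t i ^ 2 = (1 - t) * g 0 i ^ 2 + t * g 1 i ^ 2 - t * (1 - t) * c i)
    (hc : ∀ i, μ ≤ c i) (hmin : ∀ t, ⨆ i, g 0 i ≤ ⨆ i, g t i) :
    (⨆ i, g 0 i) ^ 2 + μ ≤ (⨆ i, g 1 i) ^ 2 := by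
  set N := ⨆ i, g 0 i
  have hN : 0 ≤ N := Real.iSup_nonneg (hg 0)
  have hnear : ∀ t ∈ Ioo (0 : ℝ) 1, N ^ 2 - t + (1 - t) * μ ≤ (⨆ i, g 1 i) ^ 2 := by
    rintro t ⟨ht0, ht1⟩
    obtain ⟨i, hi⟩ : ∃ i, N ^ 2 - t ^ 2 < g t i ^ 2 := exists_lt_sq_of_lt_sq_ciSup (hg t) <|
      (sub_lt_self _ (by positivity)).trans_le (pow_le_pow_left₀ hN (hmin t) 2)
    have h0 : g 0 i ^ 2 ≤ N ^ 2 := pow_le_pow_left₀ (hg 0 i) (le_ciSup (hbdd 0) i) 2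
    have h1 : g 1 i ^ 2 ≤ (⨆ i, g 1 i) ^ 2 := pow_le_pow_left₀ (hg 1 i) (le_ciSup (hbdd 1) i) 2
    have : t * (N ^ 2 - t + (1 - t) * μ) ≤ t * (⨆ i, g 1 i) ^ 2 := by
      have := hline t i
      nlinarith [mul_nonneg (mul_nonneg ht0.le (sub_nonneg.2 ht1.le)) (sub_nonneg.2 (hc i)),
        mul_nonneg (sub_nonneg.2 ht1.le) (sub_nonneg.2 h0), mul_nonneg ht0.le (sub_nonneg.2 h1)]
    exact le_of_mul_le_mul_left this ht0
  have hlim : Tendsto (fun t : ℝ => N ^ 2 - t + (1 - t) * μ) (𝓝[>] 0) (𝓝 (N ^ 2 + μ)) := by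
    have : Continuous (fun t : ℝ => N ^ 2 - t + (1 - t) * μ) := by fun_prop
    simpa using (this.tendsto 0).mono_left nhdsWithin_le_nhds
  exact le_of_tendsto hlim (eventually_of_mem (Ioo_mem_nhdsGT one_pos) hnear)

theorem norm_add_ofReal_smul_sq {𝕜 E : Type*} [RCLike 𝕜] [NormedAddCommGroup E]
    [InnerProductSpace 𝕜 E] (u v : E) (t : ℝ) :
    ‖u + (t : 𝕜) • v‖ ^ 2 = (1 - t) * ‖u‖ ^ 2 + t * ‖u + v‖ ^ 2 - t * (1 - t) * ‖v‖ ^ 2 := by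
  rw [norm_add_sq (𝕜 := 𝕜), norm_add_sq (𝕜 := 𝕜), inner_smul_right, norm_smul,
    RCLike.re_ofReal_mul, RCLike.norm_ofReal, mul_pow, sq_abs]
  ring

section

variable [NormedAddCommGroup H] [InnerProductSpace ℂ H] {A : H →L[ℂ] H}

def sphereA (A : H →L[ℂ] H) : Set H := {x | normA A x = 1}

theorem setOf_exists_sphereA_eq_range (f : H → ℝ) :
    {r : ℝ | ∃ x : H, normA A x = 1 ∧ r = f x} = range (fun x : sphereA A => f x) := by
  ext r
  simp [sphereA, eq_comm]

theorem semNormA_eq_ciSup (l : ℝ) (T : H →L[ℂ] H) :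
    semNormA A l T = ⨆ x : sphereA A, qA A l T x := by
  rw [semNormA, setOf_exists_sphereA_eq_range, sSup_range]

theorem mA_eq_ciInf (l : ℝ) (S : H →L[ℂ] H) : mA A l S = ⨅ x : sphereA A, qA A l S x := by
  rw [mA, setOf_exists_sphereA_eq_range, sInf_range]

variable [CompleteSpace H]

theorem innA_eq_inner_sqrt (hA : A.IsPositive) (x y : H) :
    innA A x y = ⟪CFC.sqrt A y, CFC.sqrt A x⟫_ℂ := by
  have hR : IsSelfAdjoint (CFC.sqrt A) := .of_nonneg (CFC.sqrt_nonneg A)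
  rw [innA, ← ContinuousLinearMap.adjoint_inner_right, hR.adjoint_eq, ← mul_apply_eq_comp,
    CFC.sqrt_mul_sqrt_self A ((ContinuousLinearMap.nonneg_iff_isPositive A).2 hA)]

theorem normA_eq_norm_sqrt (hA : A.IsPositive) (x : H) : normA A x = ‖CFC.sqrt A x‖ := by
  rw [normA, innA_eq_inner_sqrt hA, ← RCLike.re_to_complex, inner_self_eq_norm_sq,
    Real.sqrt_sq (norm_nonneg _)]

variable {l : ℝ}

theorem qA_sq (hA : A.IsPositive) (hl0 : 0 ≤ l) (hl1 : l ≤ 1) (U : H →L[ℂ] H) (x : H) :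
    qA A l U x ^ 2 =
      l * ‖CFC.sqrt A (U x)‖ ^ 2 + (1 - l) * ‖⟪CFC.sqrt A x, CFC.sqrt A (U x)⟫_ℂ‖ ^ 2 := by
  rw [qA, normA_eq_norm_sqrt hA, innA_eq_inner_sqrt hA, Real.sq_sqrt]
  have : 0 ≤ 1 - l := sub_nonneg.2 hl1
  positivity

theorem qA_le_normA (hA : A.IsPositive) (hl0 : 0 ≤ l) (hl1 : l ≤ 1) (U : H →L[ℂ] H) {x : H}
    (hx : normA A x = 1) : qA A l U x ≤ normA A (U x) := by
  have hq : 0 ≤ qA A l U x := Real.sqrt_nonneg _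
  rw [normA_eq_norm_sqrt hA] at hx ⊢
  rw [← sq_le_sq₀ hq (norm_nonneg _), qA_sq hA hl0 hl1]
  have hCS : ‖⟪CFC.sqrt A x, CFC.sqrt A (U x)⟫_ℂ‖ ^ 2 ≤ ‖CFC.sqrt A (U x)‖ ^ 2 := by
    gcongr
    simpa [hx] using norm_inner_le_norm (𝕜 := ℂ) (CFC.sqrt A x) (CFC.sqrt A (U x))
  nlinarith

theorem qA_sq_add_ofReal_mul_smul (hA : A.IsPositive) (hl0 : 0 ≤ l) (hl1 : l ≤ 1)
    (T S : H →L[ℂ] H) (ξ : ℂ) (t : ℝ) (x : H) :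
    qA A l (T + ((t : ℂ) * ξ) • S) x ^ 2 = (1 - t) * qA A l T x ^ 2 +
      t * qA A l (T + ξ • S) x ^ 2 - t * (1 - t) * (‖ξ‖ ^ 2 * qA A l S x ^ 2) := by
  simp only [qA_sq hA hl0 hl1, add_apply, smul_apply, map_add, map_smul, mul_smul,
    inner_add_right, inner_smul_right, ← RCLike.ofReal_eq_complex_ofReal]
  rw [norm_add_ofReal_smul_sq, ← smul_eq_mul (RCLike.ofReal t : ℂ), norm_add_ofReal_smul_sq]
  simp only [norm_smul, norm_mul, mul_pow]
  ring

theorem bddAbove_range_qA_add_smul (hA : A.IsPositive) (hl0 : 0 ≤ l) (hl1 : l ≤ 1)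
    {T S : H →L[ℂ] H} (hT : BddAbove (range fun x : sphereA A => normA A (T x)))
    (hS : BddAbove (range fun x : sphereA A => normA A (S x))) (ξ : ℂ) :
    BddAbove (range fun x : sphereA A => qA A l (T + ξ • S) x) := by
  obtain ⟨MT, hMT⟩ := hT
  obtain ⟨MS, hMS⟩ := hS
  refine ⟨MT + ‖ξ‖ * MS, forall_mem_range.2 fun x => ?_⟩
  have hTx : normA A (T x) ≤ MT := hMT ⟨x, rfl⟩
  have hSx : normA A (S x) ≤ MS := hMS ⟨x, rfl⟩
  calc qA A l (T + ξ • S) x ≤ normA A ((T + ξ • S) x) := qA_le_normA hA hl0 hl1 _ x.2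
    _ ≤ normA A (T x) + ‖ξ‖ * normA A (S x) := by
      simp only [normA_eq_norm_sqrt hA, add_apply, smul_apply, map_add, map_smul, ← norm_smul]
      exact norm_add_le _ _
    _ ≤ MT + ‖ξ‖ * MS := by gcongr

end

theorem BJ_orthogonal_iff_sq_ineq
    [NormedAddCommGroup H] [InnerProductSpace ℂ H] [CompleteSpace H]
    (A : H →L[ℂ] H) (hA : A.IsPositive) {l : ℝ} (hl : l ∈ Set.Icc (0 : ℝ) 1)
    (T S : H →L[ℂ] H) (hT : BddAbove {r : ℝ | ∃ x : H, normA A x = 1 ∧ r = normA A (T x)}) (hS : BddAbove {r : ℝ | ∃ x : H, normA A x = 1 ∧ r = normA A (S x)}) :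
    (∀ ξ : ℂ, semNormA A l T ≤ semNormA A l (T + ξ • S)) ↔
      (∀ ξ : ℂ,
        semNormA A l T ^ 2 + ‖ξ‖ ^ 2 * mA A l S ^ 2 ≤
          semNormA A l (T + ξ • S) ^ 2) := by
  obtain ⟨hl0, hl1⟩ := hl
  rw [setOf_exists_sphereA_eq_range] at hT hS
  have hq : ∀ U (x : sphereA A), 0 ≤ qA A l U x := fun _ _ => Real.sqrt_nonneg _
  simp only [semNormA_eq_ciSup, mA_eq_ciInf]
  refine ⟨fun horth ξ => ?_, fun h ξ => ?_⟩
  · rcases isEmpty_or_nonempty (sphereA A) with _ | _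
    -- no `A`-unit vectors: every `sSup`/`sInf` is over `∅`, hence `0`
    · simp [Real.iSup_of_isEmpty, Real.iInf_of_isEmpty]
    simpa using sq_ciSup_zero_add_le_sq_ciSup_one
      (fun t (x : sphereA A) => qA A l (T + ((t : ℂ) * ξ) • S) x)
      (fun x => ‖ξ‖ ^ 2 * qA A l S x ^ 2) _
      (fun _ => hq _) (fun _ => bddAbove_range_qA_add_smul hA hl0 hl1 hT hS _)
      (fun t x => by simpa using qA_sq_add_ofReal_mul_smul hA hl0 hl1 T S ξ t x)
      (fun x => mul_le_mul_of_nonneg_left (sq_ciInf_le (hq S) x) (by positivity))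
      (fun t => by simpa using horth _)
  · rw [← sq_le_sq₀ (Real.iSup_nonneg (hq T)) (Real.iSup_nonneg (hq _))]
    exact le_of_add_le_of_nonneg_left (h ξ) (by positivity)
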